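/- Let X be a metric space and ξ an equivalence class of asymptotic geodesic rays (an ideal boundary point). Define ρ_ξ(x,y) = inf { d(c(s), d(t)) : s, t ≥ 0 } where c, d are geodesic rays from x and y respectively in the class ξ (i.e., ρ_ξ(x,y) is the infimal distance between the rays [xξ] and [yξ]). Then ρ_ξ is a pseudometric on X: it is nonnegative, symmetric, vanishes on the diagonal, and satisfies the triangle inequality. -/

import Mathlib

/-!
Write `D(t)` for the distance from the point at time `t` on the ray `[xξ]` to the ray `[yξ]`.
Busemann convexity makes `D` midpoint convex and asymptoticity makes it bounded, so `D` is
nonincreasing; hence every near-optimal pair of points on `[xξ]` and `[yξ]` can be moved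
arbitrarily far out along `[xξ]`. For the triangle inequality, take such a pair on `[xξ]`, `[yξ]`
far out, and then, starting from the (necessarily also far out) point of `[yξ]`, a near-optimal
pair on `[yξ]`, `[zξ]`.
-/

open Set Metric

lemma le_of_bddAbove_of_two_mul_le_add {g : ℕ → ℝ} (hbdd : BddAbove (range g))
    (hconv : ∀ n, 2 * g (n + 1) ≤ g n + g (n + 2)) : g 1 ≤ g 0 := by
  obtain ⟨C, hC⟩ := hbdd
  have hincr : ∀ n, g 1 - g 0 ≤ g (n + 1) - g n := by
    intro n
    induction n with
    | zero => exact le_rfl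
    | succ n ih => linarith [hconv n]
  have hgrow : ∀ n : ℕ, g 0 + n * (g 1 - g 0) ≤ g n := by
    intro n
    induction n with
    | zero => simp
    | succ n ih => push_cast; linarith [hincr n]
  by_contra! h
  obtain ⟨n, hn⟩ := exists_nat_gt ((C - g 0) / (g 1 - g 0))
  have := (div_lt_iff₀ (sub_pos.2 h)).1 hn
  linarith [hgrow n, hC (mem_range_self n)]

lemma antitoneOn_of_midpoint_convex_of_bddAbove {f : ℝ → ℝ} {a : ℝ}
    (hbdd : BddAbove (f '' Ici a))
    (hmid : ∀ s ∈ Ici a, ∀ t ∈ Ici a, f ((s + t) / 2) ≤ (f s + f t) / 2) :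
    AntitoneOn f (Ici a) := by
  intro s hs t _ hst
  have hmem : ∀ n : ℕ, s + n * (t - s) ∈ Ici a := fun n =>
    le_add_of_le_of_nonneg hs (mul_nonneg n.cast_nonneg (sub_nonneg.2 hst))
  have hfirst := le_of_bddAbove_of_two_mul_le_add (g := fun n : ℕ => f (s + n * (t - s)))
    (hbdd.mono (range_subset_iff.2 fun n => mem_image_of_mem f (hmem n))) fun n => by
      have h := hmid _ (hmem n) _ (hmem (n + 2))
      rw [show (s + n * (t - s) + (s + ((n + 2 : ℕ) : ℝ) * (t - s))) / 2
        = s + ((n + 1 : ℕ) : ℝ) * (t - s) by push_cast; ring] at h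
      linarith
  simpa using hfirst

section Busemann

variable {X : Type*} [PseudoMetricSpace X]

def IsMidpoint (x y m : X) : Prop :=
  dist x m = dist x y / 2 ∧ dist m y = dist x y / 2

lemma IsMidpoint.symm {x y m : X} (h : IsMidpoint x y m) : IsMidpoint y x m := by
  rw [IsMidpoint, dist_comm y x, dist_comm y m, dist_comm m x]
  exact And.symm h

variable (X) in
def BusemannConvex : Prop :=
  ∀ x y z m n : X, IsMidpoint x y m → IsMidpoint x z n → dist m n ≤ dist y z / 2

def IsGeodesicRay (c : ℝ → X) : Prop :=
  ∀ s t, 0 ≤ s → 0 ≤ t → dist (c s) (c t) = |s - t|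

lemma IsGeodesicRay.isMidpoint {c : ℝ → X} (hc : IsGeodesicRay c) {a b : ℝ}
    (ha : 0 ≤ a) (hb : 0 ≤ b) : IsMidpoint (c a) (c b) (c ((a + b) / 2)) := by
  have hm : 0 ≤ (a + b) / 2 := by linarith
  rw [IsMidpoint, hc _ _ ha hm, hc _ _ hm hb, hc _ _ ha hb,
    show a - (a + b) / 2 = (a - b) / 2 by ring, show (a + b) / 2 - b = (a - b) / 2 by ring,
    abs_div, abs_two]
  exact ⟨rfl, rfl⟩

lemma IsGeodesicRay.dist_zero {c : ℝ → X} (hc : IsGeodesicRay c) {t : ℝ} (ht : 0 ≤ t) :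
    dist (c 0) (c t) = t := by
  rw [hc _ _ le_rfl ht, zero_sub, abs_neg, abs_of_nonneg ht]

/-- Proved through a midpoint of `x₁` and `y₂`. -/
lemma BusemannConvex.dist_midpoints_le (hX : BusemannConvex X)
    (hgeo : ∀ x y : X, ∃ m, IsMidpoint x y m) {x₁ x₂ y₁ y₂ m₁ m₂ : X}
    (h₁ : IsMidpoint x₁ x₂ m₁) (h₂ : IsMidpoint y₂ y₁ m₂) :
    dist m₁ m₂ ≤ (dist x₁ y₁ + dist x₂ y₂) / 2 := by
  obtain ⟨p, hp⟩ := hgeo x₁ y₂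
  have hx := hX _ _ _ _ _ h₁ hp
  have hy := hX _ _ _ _ _ h₂ hp.symm
  calc dist m₁ m₂ ≤ dist m₁ p + dist m₂ p := dist_triangle_right _ _ _
    _ ≤ (dist x₁ y₁ + dist x₂ y₂) / 2 := by rw [dist_comm y₁ x₁] at hy; linarith

noncomputable def rayInfDist (c c' : ℝ → X) : ℝ :=
  sInf {e | ∃ s t : ℝ, 0 ≤ s ∧ 0 ≤ t ∧ e = dist (c s) (c' t)}

section rayInfDist

variable {c c' c'' : ℝ → X}

lemma rayInfDist_nonneg : 0 ≤ rayInfDist c c' :=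
  Real.sInf_nonneg <| by rintro _ ⟨s, t, -, -, rfl⟩; exact dist_nonneg

lemma rayInfDist_le_dist {s t : ℝ} (hs : 0 ≤ s) (ht : 0 ≤ t) :
    rayInfDist c c' ≤ dist (c s) (c' t) :=
  csInf_le ⟨0, by rintro _ ⟨s, t, -, -, rfl⟩; exact dist_nonneg⟩ ⟨s, t, hs, ht, rfl⟩

lemma exists_dist_lt_of_rayInfDist_lt {r : ℝ} (h : rayInfDist c c' < r) :
    ∃ s t, 0 ≤ s ∧ 0 ≤ t ∧ dist (c s) (c' t) < r := by
  obtain ⟨_, ⟨s, t, hs, ht, rfl⟩, hlt⟩ :=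
    exists_lt_of_csInf_lt (by exact ⟨_, 0, 0, le_rfl, le_rfl, rfl⟩) h
  exact ⟨s, t, hs, ht, hlt⟩

lemma rayInfDist_self : rayInfDist c c = 0 :=
  le_antisymm (by simpa using rayInfDist_le_dist (c := c) (c' := c) le_rfl le_rfl)
    rayInfDist_nonneg

lemma rayInfDist_comm : rayInfDist c c' = rayInfDist c' c := by
  unfold rayInfDist
  congr 1
  ext e
  constructor <;> rintro ⟨s, t, hs, ht, rfl⟩ <;> exact ⟨t, s, ht, hs, dist_comm _ _⟩

lemma infDist_ray_midpoint_le (hX : BusemannConvex X) (hgeo : ∀ x y : X, ∃ m, IsMidpoint x y m)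
    (hc : IsGeodesicRay c) (hc' : IsGeodesicRay c') {t₁ t₂ : ℝ} (h₁ : 0 ≤ t₁) (h₂ : 0 ≤ t₂) :
    infDist (c ((t₁ + t₂) / 2)) (c' '' Ici 0) ≤
      (infDist (c t₁) (c' '' Ici 0) + infDist (c t₂) (c' '' Ici 0)) / 2 := by
  have hne : (c' '' Ici 0).Nonempty := (nonempty_Ici).image c'
  refine le_of_forall_pos_lt_add fun ε hε => ?_
  obtain ⟨_, ⟨s₁, hs₁, rfl⟩, hd₁⟩ :=
    (infDist_lt_iff hne).1 (lt_add_of_pos_right (infDist (c t₁) (c' '' Ici 0)) hε)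
  obtain ⟨_, ⟨s₂, hs₂, rfl⟩, hd₂⟩ :=
    (infDist_lt_iff hne).1 (lt_add_of_pos_right (infDist (c t₂) (c' '' Ici 0)) hε)
  have hs : (s₁ + s₂) / 2 ∈ Ici (0 : ℝ) := by simp only [mem_Ici] at *; linarith
  calc infDist (c ((t₁ + t₂) / 2)) (c' '' Ici 0) ≤ dist (c ((t₁ + t₂) / 2)) (c' ((s₁ + s₂) / 2)) :=
        infDist_le_dist_of_mem (mem_image_of_mem c' hs)
    _ ≤ (dist (c t₁) (c' s₁) + dist (c t₂) (c' s₂)) / 2 := by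
        rw [add_comm s₁]
        exact hX.dist_midpoints_le hgeo (hc.isMidpoint h₁ h₂) (hc'.isMidpoint hs₂ hs₁)
    _ < _ := by linarith

lemma antitoneOn_infDist_ray (hX : BusemannConvex X) (hgeo : ∀ x y : X, ∃ m, IsMidpoint x y m)
    (hc : IsGeodesicRay c) (hc' : IsGeodesicRay c')
    (hasymp : ∃ C, ∀ t, 0 ≤ t → ∃ s, 0 ≤ s ∧ dist (c t) (c' s) ≤ C) :
    AntitoneOn (fun t => infDist (c t) (c' '' Ici 0)) (Ici 0) := by
  obtain ⟨C, hC⟩ := hasymp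
  refine antitoneOn_of_midpoint_convex_of_bddAbove ⟨C, forall_mem_image.2 fun t ht => ?_⟩
    fun s hs t ht => infDist_ray_midpoint_le hX hgeo hc hc' hs ht
  obtain ⟨s, hs, hdist⟩ := hC t ht
  exact (infDist_le_dist_of_mem (mem_image_of_mem c' (mem_Ici.2 hs))).trans hdist

lemma exists_forall_ge_exists_dist_lt (hX : BusemannConvex X)
    (hgeo : ∀ x y : X, ∃ m, IsMidpoint x y m) (hc : IsGeodesicRay c) (hc' : IsGeodesicRay c')
    (hasymp : ∃ C, ∀ t, 0 ≤ t → ∃ s, 0 ≤ s ∧ dist (c t) (c' s) ≤ C) {r : ℝ}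
    (h : rayInfDist c c' < r) :
    ∃ T₀, 0 ≤ T₀ ∧ ∀ T, T₀ ≤ T → ∃ s, 0 ≤ s ∧ dist (c T) (c' s) < r := by
  obtain ⟨T₀, s₀, hT₀, hs₀, hd⟩ := exists_dist_lt_of_rayInfDist_lt h
  refine ⟨T₀, hT₀, fun T hT => ?_⟩
  have hlt : infDist (c T) (c' '' Ici 0) < r :=
    (antitoneOn_infDist_ray hX hgeo hc hc' hasymp hT₀ (hT₀.trans hT) hT).trans_lt
      ((infDist_le_dist_of_mem (mem_image_of_mem c' (mem_Ici.2 hs₀))).trans_lt hd)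
  obtain ⟨_, ⟨s, hs, rfl⟩, hds⟩ := (infDist_lt_iff ((nonempty_Ici).image c')).1 hlt
  exact ⟨s, hs, hds⟩

lemma sub_lt_of_dist_ray_lt (hc : IsGeodesicRay c) (hc' : IsGeodesicRay c') {T s r : ℝ}
    (hT : 0 ≤ T) (hs : 0 ≤ s) (h : dist (c T) (c' s) < r) :
    T - dist (c 0) (c' 0) - r < s := by
  have := dist_triangle4 (c 0) (c' 0) (c' s) (c T)
  rw [hc.dist_zero hT, hc'.dist_zero hs, dist_comm (c' s)] at this
  linarith

lemma rayInfDist_triangle (hX : BusemannConvex X) (hgeo : ∀ x y : X, ∃ m, IsMidpoint x y m)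
    (hc : IsGeodesicRay c) (hc' : IsGeodesicRay c') (hc'' : IsGeodesicRay c'')
    (hasymp : ∃ C, ∀ t, 0 ≤ t → ∃ s, 0 ≤ s ∧ dist (c t) (c' s) ≤ C)
    (hasymp' : ∃ C, ∀ t, 0 ≤ t → ∃ s, 0 ≤ s ∧ dist (c' t) (c'' s) ≤ C) :
    rayInfDist c c'' ≤ rayInfDist c c' + rayInfDist c' c'' := by
  refine le_of_forall_pos_lt_add fun ε hε => ?_
  obtain ⟨T₀, hT₀, hfar⟩ := exists_forall_ge_exists_dist_lt hX hgeo hc hc' hasymp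
    (lt_add_of_pos_right (rayInfDist c c') (half_pos hε))
  obtain ⟨S₀, -, hfar'⟩ := exists_forall_ge_exists_dist_lt hX hgeo hc' hc'' hasymp'
    (lt_add_of_pos_right (rayInfDist c' c'') (half_pos hε))
  set T := max T₀ (S₀ + dist (c 0) (c' 0) + rayInfDist c c' + ε / 2)
  obtain ⟨s, hs, hTs⟩ := hfar T (le_max_left _ _)
  have hS₀s : S₀ ≤ s := by
    have := sub_lt_of_dist_ray_lt hc hc' (hT₀.trans (le_max_left _ _)) hs hTs
    linarith [le_max_right T₀ (S₀ + dist (c 0) (c' 0) + rayInfDist c c' + ε / 2)]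
  obtain ⟨u, hu, hsu⟩ := hfar' s hS₀s
  calc rayInfDist c c'' ≤ dist (c T) (c'' u) :=
        rayInfDist_le_dist (hT₀.trans (le_max_left _ _)) hu
    _ ≤ dist (c T) (c' s) + dist (c' s) (c'' u) := dist_triangle _ _ _
    _ < _ := by linarith

end rayInfDist

end Busemann

theorem stmt4_general {X : Type*} [MetricSpace X]
    (hgeo : ∀ x y : X, ∃ m : X, dist x m = dist x y / 2 ∧ dist m y = dist x y / 2)
    (hconv : ∀ x y z m n : X,
      dist x m = dist x y / 2 → dist m y = dist x y / 2 →
      dist x n = dist x z / 2 → dist n z = dist x z / 2 →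
      dist m n ≤ dist y z / 2)
    (ray : X → ℝ → X)
    (hray_geo : ∀ x : X, ∀ s t : ℝ, 0 ≤ s → 0 ≤ t →
      dist (ray x s) (ray x t) = |s - t|)
    (hasymp : ∀ x y : X, ∃ C : ℝ, ∀ t : ℝ, 0 ≤ t →
      ∃ s : ℝ, 0 ≤ s ∧ dist (ray x t) (ray y s) ≤ C)
    (ρ : X → X → ℝ)
    (hρ : ∀ x y : X, ρ x y =
      sInf {e : ℝ | ∃ s t : ℝ, 0 ≤ s ∧ 0 ≤ t ∧ e = dist (ray x s) (ray y t)}) :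
    (∀ x y : X, 0 ≤ ρ x y) ∧ (∀ x : X, ρ x x = 0) ∧ (∀ x y : X, ρ x y = ρ y x) ∧
    (∀ x y z : X, ρ x z ≤ ρ x y + ρ y z) := by
  obtain rfl : ρ = fun x y => rayInfDist (ray x) (ray y) := funext fun x => funext (hρ x)
  have hX : BusemannConvex X := fun x y z m n hm hn => hconv x y z m n hm.1 hm.2 hn.1 hn.2
  exact ⟨fun _ _ => rayInfDist_nonneg, fun _ => rayInfDist_self, fun _ _ => rayInfDist_comm,
    fun x y z => rayInfDist_triangle hX hgeo (hray_geo x) (hray_geo y) (hray_geo z)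
      (hasymp x y) (hasymp y z)⟩

/-- For an ideal point `ξ` of a Busemann space, represented by an assignment `ray x` of a
geodesic ray from each point `x` (any two of which are asymptotic), the infimal distance
`ρ_ξ(x,y)` between the rays `[xξ]` and `[yξ]` is a pseudometric on `X`. -/
theorem stmt4 {X : Type*} [MetricSpace X]
    (hgeo : ∀ x y : X, ∃ m : X, dist x m = dist x y / 2 ∧ dist m y = dist x y / 2)
    (hconv : ∀ x y z m n : X,
      dist x m = dist x y / 2 → dist m y = dist x y / 2 →
      dist x n = dist x z / 2 → dist n z = dist x z / 2 →
      dist m n ≤ dist y z / 2)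
    (ray : X → ℝ → X)
    (hray0 : ∀ x : X, ray x 0 = x)
    (hray_geo : ∀ x : X, ∀ s t : ℝ, 0 ≤ s → 0 ≤ t →
      dist (ray x s) (ray x t) = |s - t|)
    (hasymp : ∀ x y : X, ∃ C : ℝ, ∀ t : ℝ, 0 ≤ t →
      ∃ s : ℝ, 0 ≤ s ∧ dist (ray x t) (ray y s) ≤ C)
    (ρ : X → X → ℝ)
    (hρ : ∀ x y : X, ρ x y =
      sInf {e : ℝ | ∃ s t : ℝ, 0 ≤ s ∧ 0 ≤ t ∧ e = dist (ray x s) (ray y t)}) :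
    (∀ x y : X, 0 ≤ ρ x y) ∧ (∀ x : X, ρ x x = 0) ∧ (∀ x y : X, ρ x y = ρ y x) ∧
    (∀ x y z : X, ρ x z ≤ ρ x y + ρ y z) :=
  stmt4_general hgeo hconv ray hray_geo hasymp ρ hρ
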